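/- For any J ∈ ℝ^𝒳 and any initial distribution η on 𝒳, with s = (J − TJ)^+, the expected cost of the greedy policy satisfies η^⊤(J_{μ_J} − J) = η^⊤ Δ_{μ_J} (TJ − J) ≤ (1/(1−α)) ν(η,J)^⊤ (J* − J + Δ* s), where Δ* = (I − α P_{μ*})^{−1}. -/

import Mathlib

open Finset Matrix

noncomputable section

/-- The Bellman operator. -/
def bellmanT {X A : Type*} [Fintype X] [Fintype A] [Nonempty A]
    (g : X → A → ℝ) (P : A → X → X → ℝ) (α : ℝ) (J : X → ℝ) : X → ℝ :=
  fun x => Finset.univ.inf' Finset.univ_nonempty fun a => g x a + α * ∑ x', P a x x' * J x'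

/-- The Bellman operator of a stationary policy. -/
def polT {X A : Type*} [Fintype X]
    (g : X → A → ℝ) (P : A → X → X → ℝ) (α : ℝ) (μ : X → A) (J : X → ℝ) : X → ℝ :=
  fun x => g x (μ x) + α * ∑ x', P (μ x) x x' * J x'

/-- Transition matrix of a stationary policy. -/
def polMat {X A : Type*} (P : A → X → X → ℝ) (μ : X → A) : Matrix X X ℝ :=
  Matrix.of fun x x' => P (μ x) x x'

/-- Δ_μ = Σ_k (α P_μ)^k = (I - α P_μ)⁻¹. -/
def deltaMat {X A : Type*} [Fintype X] [DecidableEq X]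
    (P : A → X → X → ℝ) (α : ℝ) (μ : X → A) : Matrix X X ℝ :=
  ∑' k : ℕ, (α • polMat P μ) ^ k

/-- π_{μ,ν} = (1-α) ν^⊤ (I - α P_μ)⁻¹. -/
def piDist {X A : Type*} [Fintype X] [DecidableEq X]
    (P : A → X → X → ℝ) (α : ℝ) (μ : X → A) (ν : X → ℝ) : X → ℝ :=
  fun x => (1 - α) * ∑ x0, ν x0 * deltaMat P α μ x0 x

/-- Cost-to-go of policy μ: Σ_t α^t P_μ^t g_μ. -/
def Jpol {X A : Type*} [Fintype X] [DecidableEq X]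
    (g : X → A → ℝ) (P : A → X → X → ℝ) (α : ℝ) (μ : X → A) : X → ℝ :=
  fun x => ∑' t : ℕ, α ^ t * (((polMat P μ) ^ t) *ᵥ (fun y => g y (μ y))) x

/-- Linear combination of basis functions. -/
def phiR {X : Type*} {K : ℕ} (Φ : X → Fin K → ℝ) (r : Fin K → ℝ) : X → ℝ :=
  fun x => ∑ i, Φ x i * r i

/-- ν-weighted 1-norm. -/
def wnorm1 {X : Type*} [Fintype X] (ν J : X → ℝ) : ℝ := ∑ x, ν x * |J x|

/-- Max norm. -/
def supNorm {X : Type*} [Fintype X] [Nonempty X] (J : X → ℝ) : ℝ :=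
  Finset.univ.sup' Finset.univ_nonempty fun x => |J x|

/-- ψ-weighted max norm ‖J‖_{∞,1/ψ}. -/
def wsupNorm {X : Type*} [Fintype X] [Nonempty X] (ψ J : X → ℝ) : ℝ :=
  Finset.univ.sup' Finset.univ_nonempty fun x => |J x| / ψ x

/-- β(ψ) = max_{x,a} (Σ_{x'} P_a(x,x') ψ(x')) / ψ(x). -/
def betaPsi {X A : Type*} [Fintype X] [Nonempty X] [Fintype A] [Nonempty A]
    (P : A → X → X → ℝ) (ψ : X → ℝ) : ℝ :=
  Finset.univ.sup' Finset.univ_nonempty fun p : X × A => (∑ x', P p.2 p.1 x' * ψ x') / ψ p.1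

/-- Feasible values of the LP defining ℓ(r,θ). -/
def ellSet {X A : Type*} [Fintype X] [Fintype A] [Nonempty A] {K : ℕ}
    (g : X → A → ℝ) (P : A → X → X → ℝ) (α : ℝ) (π : X → ℝ)
    (Φ : X → Fin K → ℝ) (r : Fin K → ℝ) (θ : ℝ) : Set ℝ :=
  {v | ∃ (s : X → ℝ) (γ : ℝ), v = γ / (1 - α) ∧
    (∀ x, phiR Φ r x - bellmanT g P α (phiR Φ r) x ≤ s x + γ) ∧
    (∑ x, π x * s x ≤ θ) ∧ (∀ x, 0 ≤ s x)}

/-- ℓ(r,θ): optimal value of the LP (3.2). -/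
def ellVal {X A : Type*} [Fintype X] [Fintype A] [Nonempty A] {K : ℕ}
    (g : X → A → ℝ) (P : A → X → X → ℝ) (α : ℝ) (π : X → ℝ)
    (Φ : X → Fin K → ℝ) (r : Fin K → ℝ) (θ : ℝ) : ℝ :=
  sInf (ellSet g P α π Φ r θ)

/-!
For a row-stochastic `M` and `0 ≤ α < 1` the series `∑ (α M)^k` converges (the `ℓ∞` operator
norm of `α M` is at most `α`) to the entrywise nonnegative inverse of `1 - α M`; hence
`e ≤ α M e + w` implies `e ≤ (∑ (α M)^k) w`.

The identity is the policy-evaluation equation `J_μ = Δ_μ g_μ` combined with `T_{μ_J} J = TJ`.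
For the bound, `TJ ≤ T_{μ*} J` and `J* = T_{μ*} J*` show that `e = TJ - J* + s` with
`s = (J - TJ)⁺` satisfies `e ≤ α P_{μ*} e + s`, so `TJ - J* ≤ e ≤ Δ* s`. Applying the
nonnegative row vector `η^⊤ Δ_{μ_J} = ν(η,J)^⊤ / (1 - α)` to `TJ - J ≤ J* - J + Δ* s` concludes.
-/

namespace Matrix

variable {n : Type*} [Fintype n]

theorem mulVec_mono_of_nonneg {m R : Type*} [Semiring R] [PartialOrder R] [IsOrderedRing R]
    {A : Matrix m n R} (hA : ∀ i j, 0 ≤ A i j) {v w : n → R} (h : v ≤ w) :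
    A *ᵥ v ≤ A *ᵥ w := fun i =>
  dotProduct_le_dotProduct_of_nonneg_left h (hA i)

variable [DecidableEq n] {M : Matrix n n ℝ} {α : ℝ}

section LinftyOpNorm

attribute [local instance] Matrix.linftyOpNormedRing Matrix.linftyOpNormedAlgebra

theorem linfty_opNorm_le_one_of_mem_rowStochastic (hM : M ∈ rowStochastic ℝ n) : ‖M‖ ≤ 1 := by
  rw [linfty_opNorm_def, NNReal.coe_le_one, Finset.sup_le_iff]
  intro i _
  rw [← NNReal.coe_le_one, NNReal.coe_sum]
  simp_rw [coe_nnnorm, Real.norm_of_nonneg (nonneg_of_mem_rowStochastic hM)]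
  exact (sum_row_of_mem_rowStochastic hM i).le

theorem summable_pow_smul_of_mem_rowStochastic (hM : M ∈ rowStochastic ℝ n)
    (hα0 : 0 ≤ α) (hα1 : α < 1) : Summable fun k : ℕ => (α • M) ^ k := by
  have : CompleteSpace (Matrix n n ℝ) := FiniteDimensional.complete ℝ _
  refine summable_geometric_of_norm_lt_one ((norm_smul_le α M).trans_lt ?_)
  rw [Real.norm_of_nonneg hα0]
  nlinarith [linfty_opNorm_le_one_of_mem_rowStochastic hM, norm_nonneg M]

end LinftyOpNorm

theorem tsum_pow_smul_mul_one_sub (hM : M ∈ rowStochastic ℝ n) (hα0 : 0 ≤ α) (hα1 : α < 1) :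
    (∑' k : ℕ, (α • M) ^ k) * (1 - α • M) = 1 :=
  (summable_pow_smul_of_mem_rowStochastic hM hα0 hα1).tsum_pow_mul_one_sub

theorem pow_smul_apply_nonneg (hM : M ∈ rowStochastic ℝ n) (hα0 : 0 ≤ α) (k : ℕ) (i j : n) :
    0 ≤ ((α • M) ^ k) i j := by
  rw [smul_pow, smul_apply, smul_eq_mul]
  exact mul_nonneg (pow_nonneg hα0 k) (nonneg_of_mem_rowStochastic (pow_mem hM k))

theorem tsum_pow_smul_apply_nonneg (hM : M ∈ rowStochastic ℝ n) (hα0 : 0 ≤ α) (hα1 : α < 1)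
    (i j : n) : 0 ≤ (∑' k : ℕ, (α • M) ^ k) i j := by
  have hsum := (summable_pow_smul_of_mem_rowStochastic hM hα0 hα1).hasSum
  exact (Pi.hasSum.1 (Pi.hasSum.1 hsum i) j).nonneg fun k => pow_smul_apply_nonneg hM hα0 k i j

theorem hasSum_pow_smul_mulVec (hM : M ∈ rowStochastic ℝ n) (hα0 : 0 ≤ α) (hα1 : α < 1)
    (v : n → ℝ) :
    HasSum (fun k : ℕ => (α • M) ^ k *ᵥ v) ((∑' k : ℕ, (α • M) ^ k) *ᵥ v) :=
  (summable_pow_smul_of_mem_rowStochastic hM hα0 hα1).hasSum.map (mulVec.addMonoidHomLeft v)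
    (continuous_id.matrix_mulVec continuous_const)

theorem le_tsum_pow_smul_mulVec (hM : M ∈ rowStochastic ℝ n) (hα0 : 0 ≤ α) (hα1 : α < 1)
    {e w : n → ℝ} (h : e ≤ (α • M) *ᵥ e + w) : e ≤ (∑' k : ℕ, (α • M) ^ k) *ᵥ w := by
  have hres : (1 - α • M) *ᵥ e ≤ w := by rwa [sub_mulVec, one_mulVec, sub_le_iff_le_add']
  calc e = (∑' k : ℕ, (α • M) ^ k) *ᵥ ((1 - α • M) *ᵥ e) := by
        rw [mulVec_mulVec, tsum_pow_smul_mul_one_sub hM hα0 hα1, one_mulVec]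
    _ ≤ (∑' k : ℕ, (α • M) ^ k) *ᵥ w :=
        mulVec_mono_of_nonneg (tsum_pow_smul_apply_nonneg hM hα0 hα1) hres

end Matrix

open Matrix

section DiscountedMDP

variable {X A : Type*} [Fintype X] (g : X → A → ℝ) (P : A → X → X → ℝ) (α : ℝ)

theorem polT_eq_add_mulVec (μ : X → A) (J : X → ℝ) :
    polT g P α μ J = (fun x => g x (μ x)) + (α • polMat P μ) *ᵥ J := by
  ext x
  simp [polT, polMat, mulVec, dotProduct, Finset.mul_sum, mul_assoc]

theorem bellmanT_le_polT [Fintype A] [Nonempty A] (μ : X → A) (J : X → ℝ) :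
    bellmanT g P α J ≤ polT g P α μ J := fun x =>
  Finset.inf'_le _ (Finset.mem_univ (μ x))

variable {P} [DecidableEq X]

theorem polMat_mem_rowStochastic (hP0 : ∀ a x x', 0 ≤ P a x x')
    (hP1 : ∀ a x, ∑ x', P a x x' = 1) (μ : X → A) : polMat P μ ∈ rowStochastic ℝ X :=
  mem_rowStochastic_iff_sum.2 ⟨fun _ _ => hP0 _ _ _, fun _ => hP1 _ _⟩

theorem piDist_eq_smul_vecMul (μ : X → A) (η : X → ℝ) :
    piDist P α μ η = (1 - α) • (η ᵥ* deltaMat P α μ) := by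
  ext x
  simp [piDist, vecMul, dotProduct]

variable {α} (hP0 : ∀ a x x', 0 ≤ P a x x') (hP1 : ∀ a x, ∑ x', P a x x' = 1)
  (hα0 : 0 ≤ α) (hα1 : α < 1)
include hP0 hP1 hα0 hα1

theorem deltaMat_apply_nonneg (μ : X → A) (x y : X) : 0 ≤ deltaMat P α μ x y :=
  tsum_pow_smul_apply_nonneg (polMat_mem_rowStochastic hP0 hP1 μ) hα0 hα1 x y

theorem Jpol_eq_deltaMat_mulVec (μ : X → A) :
    Jpol g P α μ = deltaMat P α μ *ᵥ fun x => g x (μ x) := by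
  ext x
  have hsum := Pi.hasSum.1 (hasSum_pow_smul_mulVec (polMat_mem_rowStochastic hP0 hP1 μ) hα0 hα1
    fun x => g x (μ x)) x
  refine (tsum_congr fun k => ?_).trans hsum.tsum_eq
  rw [smul_pow, smul_mulVec, Pi.smul_apply, smul_eq_mul]

theorem Jpol_sub_eq_deltaMat_mulVec (μ : X → A) (J : X → ℝ) :
    Jpol g P α μ - J = deltaMat P α μ *ᵥ (polT g P α μ J - J) := by
  have hinv : deltaMat P α μ * (1 - α • polMat P μ) = 1 :=
    tsum_pow_smul_mul_one_sub (polMat_mem_rowStochastic hP0 hP1 μ) hα0 hα1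
  have himprove : polT g P α μ J - J = (fun x => g x (μ x)) - (1 - α • polMat P μ) *ᵥ J := by
    rw [polT_eq_add_mulVec, sub_mulVec, one_mulVec]
    abel
  rw [himprove, mulVec_sub, mulVec_mulVec, hinv, one_mulVec,
    Jpol_eq_deltaMat_mulVec g hP0 hP1 hα0 hα1]

theorem bellmanT_sub_le_deltaMat_mulVec [Fintype A] [Nonempty A] {μ : X → A} {J' : X → ℝ}
    (hfix : polT g P α μ J' = J') (J : X → ℝ) :
    bellmanT g P α J - J' ≤ deltaMat P α μ *ᵥ (J - bellmanT g P α J)⁺ := by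
  set Q := α • polMat P μ
  set s := (J - bellmanT g P α J)⁺
  have hQ : ∀ x y, 0 ≤ Q x y := fun _ _ => mul_nonneg hα0 (hP0 _ _ _)
  have hT : bellmanT g P α J - J' ≤ Q *ᵥ (J - J') := by
    have hJ' : J' = (fun x => g x (μ x)) + Q *ᵥ J' := by rw [← polT_eq_add_mulVec, hfix]
    calc bellmanT g P α J - J' ≤ polT g P α μ J - J' :=
          sub_le_sub_right (bellmanT_le_polT g P α μ J) J'
      _ = Q *ᵥ (J - J') := by
          rw [polT_eq_add_mulVec, mulVec_sub]
          conv_lhs => rw [hJ']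
          abel
  have hJ : J - J' ≤ bellmanT g P α J - J' + s := by
    rw [sub_add_eq_add_sub]
    exact sub_le_sub_right (sub_le_iff_le_add'.1 (le_posPart _)) J'
  have hsub : bellmanT g P α J - J' + s ≤ Q *ᵥ (bellmanT g P α J - J' + s) + s :=
    add_le_add_left (hT.trans (mulVec_mono_of_nonneg hQ hJ)) s
  calc bellmanT g P α J - J' ≤ bellmanT g P α J - J' + s :=
        le_add_of_nonneg_right (posPart_nonneg _)
    _ ≤ deltaMat P α μ *ᵥ s :=
        le_tsum_pow_smul_mulVec (polMat_mem_rowStochastic hP0 hP1 μ) hα0 hα1 hsub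

end DiscountedMDP

theorem greedy_policy_cost_identity_and_bound_general
    {X A : Type*} [Fintype X] [Fintype A] [Nonempty A] [DecidableEq X]
    (g : X → A → ℝ) (P : A → X → X → ℝ) (α : ℝ)
    (hα0 : 0 < α) (hα1 : α < 1)
    (hP0 : ∀ a x x', 0 ≤ P a x x') (hP1 : ∀ a x, ∑ x', P a x x' = 1)
    (Jstar : X → ℝ) (hJstar : bellmanT g P α Jstar = Jstar)
    (μs : X → A) (hμs : polT g P α μs Jstar = bellmanT g P α Jstar)
    (J : X → ℝ) (μJ : X → A) (hμJ : polT g P α μJ J = bellmanT g P α J)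
    (η : X → ℝ) (hη0 : ∀ x, 0 ≤ η x) :
    (∑ x, η x * (Jpol g P α μJ x - J x) =
      ∑ x, η x * (deltaMat P α μJ *ᵥ (fun y => bellmanT g P α J y - J y)) x) ∧
    (∑ x, η x * (Jpol g P α μJ x - J x) ≤
      (1 / (1 - α)) * ∑ x, piDist P α μJ η x *
        (Jstar x - J x +
          (deltaMat P α μs *ᵥ (fun y => max (J y - bellmanT g P α J y) 0)) x)) := by
  set T := bellmanT g P α
  set Δ := deltaMat P α μJ
  have hcost : Jpol g P α μJ - J = Δ *ᵥ (T J - J) := by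
    rw [← hμJ]
    exact Jpol_sub_eq_deltaMat_mulVec g hP0 hP1 hα0.le hα1 μJ J
  have hgap : T J - J ≤ Jstar - J + deltaMat P α μs *ᵥ (J - T J)⁺ := by
    rw [add_comm, ← sub_add_sub_cancel (T J) Jstar J]
    exact add_le_add_left (bellmanT_sub_le_deltaMat_mulVec g hP0 hP1 hα0.le hα1
      (hμs.trans hJstar) J) _
  -- `∑ x, u x * v x` is `u ⬝ᵥ v` and `fun y => max (u y) 0` is `u⁺` by definition
  change η ⬝ᵥ (Jpol g P α μJ - J) = η ⬝ᵥ (Δ *ᵥ (T J - J)) ∧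
    η ⬝ᵥ (Jpol g P α μJ - J) ≤
      1 / (1 - α) * (piDist P α μJ η ⬝ᵥ (Jstar - J + deltaMat P α μs *ᵥ (J - T J)⁺))
  refine ⟨by rw [hcost], ?_⟩
  calc η ⬝ᵥ (Jpol g P α μJ - J)
      ≤ η ⬝ᵥ (Δ *ᵥ (Jstar - J + deltaMat P α μs *ᵥ (J - T J)⁺)) := by
        rw [hcost]
        exact dotProduct_le_dotProduct_of_nonneg_left
          (mulVec_mono_of_nonneg (deltaMat_apply_nonneg hP0 hP1 hα0.le hα1 μJ) hgap) hη0
    _ = 1 / (1 - α) * (piDist P α μJ η ⬝ᵥ (Jstar - J + deltaMat P α μs *ᵥ (J - T J)⁺)) := by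
        rw [piDist_eq_smul_vecMul, smul_dotProduct, ← dotProduct_mulVec, smul_eq_mul,
          one_div, inv_mul_cancel_left₀ (sub_ne_zero.2 hα1.ne')]

/-- with s = (J - TJ)^+,
η^⊤(J_{μ_J} - J) = η^⊤ Δ_{μ_J} (TJ - J) ≤ (1/(1-α)) ν(η,J)^⊤ (J* - J + Δ* s). -/
theorem greedy_policy_cost_identity_and_bound
    {X A : Type*} [Fintype X] [Nonempty X] [Fintype A] [Nonempty A] [DecidableEq X]
    (g : X → A → ℝ) (P : A → X → X → ℝ) (α : ℝ)
    (hα0 : 0 < α) (hα1 : α < 1)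
    (hP0 : ∀ a x x', 0 ≤ P a x x') (hP1 : ∀ a x, ∑ x', P a x x' = 1)
    (Jstar : X → ℝ) (hJstar : bellmanT g P α Jstar = Jstar)
    (μs : X → A) (hμs : polT g P α μs Jstar = bellmanT g P α Jstar)
    (J : X → ℝ) (μJ : X → A) (hμJ : polT g P α μJ J = bellmanT g P α J)
    (η : X → ℝ) (hη0 : ∀ x, 0 ≤ η x) (hη1 : ∑ x, η x = 1) :
    (∑ x, η x * (Jpol g P α μJ x - J x) =
      ∑ x, η x * (deltaMat P α μJ *ᵥ (fun y => bellmanT g P α J y - J y)) x) ∧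
    (∑ x, η x * (Jpol g P α μJ x - J x) ≤
      (1 / (1 - α)) * ∑ x, piDist P α μJ η x *
        (Jstar x - J x +
          (deltaMat P α μs *ᵥ (fun y => max (J y - bellmanT g P α J y) 0)) x)) :=
  greedy_policy_cost_identity_and_bound_general g P α hα0 hα1 hP0 hP1 Jstar hJstar μs hμs J μJ hμJ η
    hη0
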